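/- arXiv:1408.1865 — 7 statements merged into one kernel-verified Lean document; each statement's English description precedes it below -/
import Mathlib

section
/- Let n and g be natural numbers and let a be an odd natural number with 3 ≤ a ≤ n − 2. Set k = (a+1)/2 and v = gcd(k−1, n) + gcd(k, n), and suppose n + 1 = 2g + v (the genus equation for the elementary tête-à-tête graph E_{n,a}). Then n ≤ 3g + 3. -/
/-!
Write `a = 2j + 1`, so `k = j + 1`, and put `d = gcd(j, n)`, `e = gcd(j + 1, n)`. The genus equation
turns `n ≤ 3g + 3` into `3(d + e) ≤ n + 9`. Since `n ≥ 2j + 3`, both `d` and `e` are divisors of `n`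
smaller than `n / 2`, hence at most `n / 3`; this settles the case `min(d, e) ≤ 3`. Otherwise
`(d - 3)(e - 3) ≥ 0` gives `3(d + e) ≤ de + 9`, and `de ≤ n` because `d` and `e` are coprime
divisors of `n`.
-/

namespace Nat

theorem three_mul_le_of_dvd_of_two_mul_lt {d n : ℕ} (hd : d ∣ n) (hlt : 2 * d < n) :
    3 * d ≤ n := by
  obtain ⟨c, rfl⟩ := hd
  have hc : 3 ≤ c := by
    by_contra! hc
    interval_cases c <;> omega
  calc 3 * d = d * 3 := Nat.mul_comm 3 d
    _ ≤ d * c := Nat.mul_le_mul_left d hc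

theorem three_mul_add_le_of_coprime_dvd {d e n : ℕ} (hn : 0 < n) (hde : Coprime d e)
    (hd : d ∣ n) (he : e ∣ n) (hd3 : 3 * d ≤ n) (he3 : 3 * e ≤ n) :
    3 * (d + e) ≤ n + 9 := by
  by_cases hsmall : d ≤ 3 ∨ e ≤ 3
  · omega
  · have hprod : d * e ≤ n := Nat.le_of_dvd hn (hde.mul_dvd_of_dvd_of_dvd hd he)
    nlinarith [Nat.mul_le_mul (show 3 ≤ d by omega) (show 3 ≤ e by omega)]

theorem three_mul_gcd_add_gcd_succ_le {j n : ℕ} (hj : 1 ≤ j) (hn : 2 * j + 3 ≤ n) :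
    3 * (gcd j n + gcd (j + 1) n) ≤ n + 9 := by
  have hcop : Coprime (gcd j n) (gcd (j + 1) n) := by
    have h := Coprime.gcd_both n n (coprime_self_add_right.mpr (coprime_one_right j))
    rwa [gcd_comm n j, gcd_comm n (j + 1)] at h
  have hd : gcd j n ≤ j := Nat.le_of_dvd hj (gcd_dvd_left j n)
  have he : gcd (j + 1) n ≤ j + 1 := Nat.le_of_dvd j.succ_pos (gcd_dvd_left (j + 1) n)
  exact three_mul_add_le_of_coprime_dvd (by omega) hcop (gcd_dvd_right j n)
    (gcd_dvd_right (j + 1) n)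
    (three_mul_le_of_dvd_of_two_mul_lt (gcd_dvd_right j n) (by omega))
    (three_mul_le_of_dvd_of_two_mul_lt (gcd_dvd_right (j + 1) n) (by omega))

end Nat

/-- Bound `n ≤ 3g + 3` for the order of an elementary tête-à-tête twist
`E_{n,a}` of genus `g`, with `a` odd, `3 ≤ a ≤ n - 2`, `k = (a+1)/2`,
`v = gcd(k-1,n) + gcd(k,n)` and the genus equation `n + 1 = 2g + v`. -/
theorem elementary_tat_order_le_three_g_add_three
    (n g a : ℕ) (ha : Odd a) (h3 : 3 ≤ a) (h2 : a ≤ n - 2)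
    (hgen : n + 1 = 2 * g +
      (Nat.gcd ((a + 1) / 2 - 1) n + Nat.gcd ((a + 1) / 2) n)) :
    n ≤ 3 * g + 3 := by
  obtain ⟨j, rfl⟩ := ha
  have hk : (2 * j + 1 + 1) / 2 = j + 1 := by omega
  rw [hk, Nat.add_sub_cancel] at hgen
  have key := Nat.three_mul_gcd_add_gcd_succ_le (j := j) (n := n) (by omega) (by omega)
  omega
end

section
/- Let n and g be natural numbers and let a be an odd natural number with 3 ≤ a ≤ n − 2. Set k = (a+1)/2 and v = gcd(k−1, n) + gcd(k, n), and suppose n + 1 = 2g + v. If g ≡ 2 (mod 3), then n ≤ 3g. -/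
/-!
Write `t = (a - 1) / 2`, so that `v = d₁ + d₂` with `d₁ = gcd(t, n)` and `d₂ = gcd(t + 1, n)`.
Consecutive integers are coprime, hence `n = m d₁ d₂` for some `m`, and the claim `n ≤ 3g` becomes
`3 (d₁ + d₂) ≤ n + 3`. The bound `a ≤ n - 2` gives `2 dᵢ < n`, which rules out `m = 0` and forces
`dᵢ ≥ 2` (`dᵢ ≥ 3` if `m = 1`). For `m ≥ 2` the inequality is then elementary. For `m = 1` we have
`2g = (d₁ - 1)(d₂ - 1)`, and `g ≡ 2 (mod 3)` forces `d₁ ≡ d₂ ≡ 2 (mod 3)` (both `≡ 0` would contradict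
coprimality), so `{d₁, d₂}` is at least `{5, 8}`, which is enough.
-/

namespace Nat

theorem mul_mod_three_eq_one_iff {x y : ℕ} :
    x * y % 3 = 1 ↔ x % 3 = 1 ∧ y % 3 = 1 ∨ x % 3 = 2 ∧ y % 3 = 2 := by
  rw [Nat.mul_mod]
  have hx := Nat.mod_lt x (by norm_num : 3 > 0)
  have hy := Nat.mod_lt y (by norm_num : 3 > 0)
  interval_cases x % 3 <;> interval_cases y % 3 <;> simp

theorem coprime_gcd_gcd_add_one (t n : ℕ) : Coprime (gcd t n) (gcd (t + 1) n) :=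
  ((coprime_self_add_right.mpr (coprime_one_right t)).coprime_dvd_left
    (gcd_dvd_left t n)).coprime_dvd_right (gcd_dvd_left (t + 1) n)

theorem gcd_mul_gcd_add_one_dvd (t n : ℕ) : gcd t n * gcd (t + 1) n ∣ n :=
  (coprime_gcd_gcd_add_one t n).mul_dvd_of_dvd_of_dvd (gcd_dvd_right t n)
    (gcd_dvd_right (t + 1) n)

namespace Coprime

variable {d₁ d₂ : ℕ}

theorem ne_of_one_lt (hcop : Coprime d₁ d₂) (h : 1 < d₁) : d₁ ≠ d₂ := by
  rintro rfl
  exact h.ne' ((coprime_self d₁).mp hcop)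

theorem three_mul_add_le_mul_add_three (hcop : Coprime d₁ d₂) (h₁ : 3 ≤ d₁) (h₂ : 3 ≤ d₂)
    (hmod : (d₁ - 1) * (d₂ - 1) % 3 = 1) : 3 * (d₁ + d₂) ≤ d₁ * d₂ + 3 := by
  rcases mul_mod_three_eq_one_iff.mp hmod with ⟨hx, hy⟩ | ⟨hx, hy⟩
  · rcases lt_or_gt_of_ne (hcop.ne_of_one_lt (by omega)) with hlt | hlt
    · have : 5 ≤ d₁ := by omega
      have : 8 ≤ d₂ := by omega
      nlinarith
    · have : 8 ≤ d₁ := by omega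
      have : 5 ≤ d₂ := by omega
      nlinarith
  · have := Nat.eq_one_of_dvd_coprimes hcop (by omega : 3 ∣ d₁) (by omega : 3 ∣ d₂)
    omega

theorem three_mul_add_le_two_mul_mul_add_three (hcop : Coprime d₁ d₂) (h₁ : 2 ≤ d₁)
    (h₂ : 2 ≤ d₂) : 3 * (d₁ + d₂) ≤ 2 * (d₁ * d₂) + 3 := by
  have hne := hcop.ne_of_one_lt h₁
  rcases (by omega : 3 ≤ d₁ ∨ 3 ≤ d₂) with h | h <;> nlinarith

end Coprime

end Nat

theorem le_three_mul_of_coprime_of_mul_dvd {d₁ d₂ n g : ℕ} (hcop : d₁.Coprime d₂)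
    (hdvd : d₁ * d₂ ∣ n) (h₁ : 2 * d₁ < n) (h₂ : 2 * d₂ < n)
    (hgen : n + 1 = 2 * g + (d₁ + d₂)) (hg : g % 3 = 2) : n ≤ 3 * g := by
  obtain ⟨m, rfl⟩ := hdvd
  have hm₂ : 2 < d₂ * m := Nat.lt_of_mul_lt_mul_left (a := d₁) (by linarith [mul_assoc d₁ d₂ m])
  have hm₁ : 2 < d₁ * m :=
    Nat.lt_of_mul_lt_mul_left (a := d₂) (by linarith [mul_comm d₁ d₂, mul_assoc d₂ d₁ m])
  suffices 3 * (d₁ + d₂) ≤ d₁ * d₂ * m + 3 by omega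
  rcases m with _ | _ | _ | m
  · simp at hm₁
  · simp only [zero_add, mul_one] at *
    have hprod : (d₁ - 1) * (d₂ - 1) = 2 * g := by
      obtain ⟨x, rfl⟩ : ∃ x, d₁ = x + 1 := ⟨d₁ - 1, by omega⟩
      obtain ⟨y, rfl⟩ : ∃ y, d₂ = y + 1 := ⟨d₂ - 1, by omega⟩
      simp only [add_tsub_cancel_right]
      nlinarith
    exact hcop.three_mul_add_le_mul_add_three hm₁ hm₂ (by omega)
  · have := hcop.three_mul_add_le_two_mul_mul_add_three (by omega) (by omega)
    linarith
  · have hd₁ : 1 ≤ d₁ := Nat.pos_of_ne_zero (by rintro rfl; simp at hm₁)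
    have hd₂ : 1 ≤ d₂ := Nat.pos_of_ne_zero (by rintro rfl; simp at hm₂)
    nlinarith

/-- Bound `n ≤ 3g` when `g ≡ 2 (mod 3)` for the order of an elementary
tête-à-tête twist `E_{n,a}` of genus `g`. -/
theorem elementary_tat_order_le_three_g_of_mod_three_eq_two
    (n g a : ℕ) (ha : Odd a) (h3 : 3 ≤ a) (h2 : a ≤ n - 2)
    (hgen : n + 1 = 2 * g +
      (Nat.gcd ((a + 1) / 2 - 1) n + Nat.gcd ((a + 1) / 2) n))
    (hg : g % 3 = 2) :
    n ≤ 3 * g := by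
  obtain ⟨t, rfl⟩ := ha
  have hk : (2 * t + 1 + 1) / 2 = t + 1 := by omega
  rw [hk, Nat.add_sub_cancel] at hgen
  have hd₁ := Nat.gcd_le_left n (by omega : 0 < t)
  have hd₂ := Nat.gcd_le_left n (by omega : 0 < t + 1)
  exact le_three_mul_of_coprime_of_mul_dvd (Nat.coprime_gcd_gcd_add_one t n)
    (Nat.gcd_mul_gcd_add_one_dvd t n) (by omega) (by omega) hgen hg
end

section
/- For every natural number g ≥ 4, there exist a natural number n and an odd natural number a with 3 ≤ a ≤ n − 2 such that, setting k = (a+1)/2 and v = gcd(k−1, n) + gcd(k, n), one has n + 1 = 2g + v, and moreover n = 3g + 3 if g ≡ 0 or 1 (mod 3), while n = 3g if g ≡ 2 (mod 3). Explicitly one may take (n, a) = (3g+3, 2g+1) if g ≡ 0 (mod 3), (n, a) = (3g+3, 2g+3) if g ≡ 1 (mod 3), and (n, a) = (3g, 2g−1) if g ≡ 2 (mod 3). -/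
/-!
Write `a = 2k - 1`, so that `(a + 1) / 2 = k`. In all three cases `n` is `3k` or `3(k - 1)`, and
since `k - 1` and `k` are coprime, one of the two gcds is `n / 3` while the other is `gcd(·, 3)`,
which the residue of `g` mod 3 pins down to `3`, `3` and `1` respectively.
-/

namespace Nat

theorem coprime_sub_one_self {k : ℕ} (hk : 0 < k) : Coprime (k - 1) k :=
  (coprime_self_sub_left hk).mpr (coprime_one_left k)

theorem succ_two_mul_sub_one_div_two {k : ℕ} (hk : 0 < k) : (2 * k - 1 + 1) / 2 = k := by
  omega

theorem gcd_three_eq_gcd_mod (m : ℕ) : gcd m 3 = gcd (m % 3) 3 := by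
  rw [gcd_comm, gcd_rec]

theorem gcd_sub_one_add_gcd_mul_self {k : ℕ} (hk : 0 < k) (c : ℕ) :
    gcd (k - 1) (c * k) + gcd k (c * k) = gcd (k - 1) c + k := by
  rw [(coprime_sub_one_self hk).symm.gcd_mul_right_cancel_right,
    gcd_eq_left (dvd_mul_left k c)]

theorem gcd_sub_one_add_gcd_mul_sub_one {k : ℕ} (hk : 0 < k) (c : ℕ) :
    gcd (k - 1) (c * (k - 1)) + gcd k (c * (k - 1)) = (k - 1) + gcd k c := by
  rw [(coprime_sub_one_self hk).gcd_mul_right_cancel_right,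
    gcd_eq_left (dvd_mul_left (k - 1) c)]

end Nat

/-- Sharpness of the bounds: for every `g ≥ 4` there is an elementary
tête-à-tête graph `E_{n,a}` of genus `g` with `n = 3g + 3` (if `g ≡ 0, 1 mod 3`)
respectively `n = 3g` (if `g ≡ 2 mod 3`); explicitly, one may take
`(n,a) = (3g+3, 2g+1)`, `(3g+3, 2g+3)`, `(3g, 2g-1)` in the three cases. -/
theorem elementary_tat_order_bounds_sharp (g : ℕ) (hg : 4 ≤ g) :
    ∃ n a : ℕ, Odd a ∧ 3 ≤ a ∧ a ≤ n - 2 ∧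
      n + 1 = 2 * g +
        (Nat.gcd ((a + 1) / 2 - 1) n + Nat.gcd ((a + 1) / 2) n) ∧
      (g % 3 = 0 → n = 3 * g + 3 ∧ a = 2 * g + 1) ∧
      (g % 3 = 1 → n = 3 * g + 3 ∧ a = 2 * g + 3) ∧
      (g % 3 = 2 → n = 3 * g ∧ a = 2 * g - 1) := by
  have hmod := Nat.mod_lt g (show 0 < 3 by norm_num)
  interval_cases h : g % 3
  · refine ⟨3 * (g + 1), 2 * (g + 1) - 1, ⟨g, by omega⟩, by omega, by omega, ?_,
      fun _ => ⟨by ring, by omega⟩, by omega, by omega⟩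
    rw [Nat.succ_two_mul_sub_one_div_two (by omega),
      Nat.gcd_sub_one_add_gcd_mul_self (by omega) 3,
      Nat.add_sub_cancel, Nat.gcd_three_eq_gcd_mod, h, Nat.gcd_zero_left]
    ring
  · refine ⟨3 * (g + 2 - 1), 2 * (g + 2) - 1, ⟨g + 1, by omega⟩, by omega, by omega, ?_,
      by omega, fun _ => ⟨by omega, by omega⟩, by omega⟩
    rw [Nat.succ_two_mul_sub_one_div_two (by omega),
      Nat.gcd_sub_one_add_gcd_mul_sub_one (by omega) 3, Nat.gcd_three_eq_gcd_mod,
      show (g + 2) % 3 = 0 by omega, Nat.gcd_zero_left]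
    omega
  · refine ⟨3 * g, 2 * g - 1, ⟨g - 1, by omega⟩, by omega, by omega, ?_,
      by omega, by omega, fun _ => ⟨rfl, rfl⟩⟩
    rw [Nat.succ_two_mul_sub_one_div_two (by omega),
      Nat.gcd_sub_one_add_gcd_mul_self (by omega) 3,
      Nat.gcd_three_eq_gcd_mod, show (g - 1) % 3 = 1 by omega, Nat.gcd_one_left]
    omega
end

section
/- Let g ≥ 4 be a natural number, and let n be a natural number and a an odd natural number with 3 ≤ a ≤ n − 2 such that, with k = (a+1)/2 and v = gcd(k−1, n) + gcd(k, n), one has n + 1 = 2g + v. If g ≡ 0 (mod 3) and n = 3g + 3, then a = 2g + 1; if g ≡ 1 (mod 3) and n = 3g + 3, then a = 2g + 3; and if g ≡ 2 (mod 3) and n = 3g, then a = 2g − 1. -/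
/-! Write `a = 2m + 1`, so that `v = x + y` with `x = gcd(m, n)` and `y = gcd(m + 1, n)`. As `m` and
`m + 1` are coprime, `xy ∣ n`, while the genus formula fixes `x + y`. For `n = 3g + 3` this gives
`(x - 3)(y - 3) = xy - n ≤ 0`, which leaves only `{x, y} = {3, g + 1}`. For `n = 3g` with
`g ≡ 2 (mod 3)` we have `x + y ≡ 0 (mod 3)`, so `3` divides neither of them (else `9 ∣ 3g`); hence
`xy ∣ g` and `(x - 1)(y - 1) = xy - g ≤ 0` leaves only `{x, y} = {1, g}`. In both cases the large
gcd divides `m` or `m + 1`, which is positive and less than twice that gcd, so it is equal to it;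
the residue of `g` mod `3` decides which one. -/

theorem Nat.gcd_mul_gcd_succ_dvd (m n : ℕ) : Nat.gcd m n * Nat.gcd (m + 1) n ∣ n := by
  have hcop : Nat.Coprime (Nat.gcd m n) (Nat.gcd (m + 1) n) := by
    simpa only [Nat.gcd_comm _ n] using
      Nat.Coprime.gcd_both n n (Nat.coprime_self_add_right.mpr (Nat.coprime_one_right m))
  exact hcop.mul_dvd_of_dvd_of_dvd (Nat.gcd_dvd_right _ _) (Nat.gcd_dvd_right _ _)

section
variable {g x y : ℕ}

lemma eq_three_of_le_three (hg : 4 ≤ g) (hx : x ≤ 3) (hsum : x + y = g + 4)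
    (hdvd : x * y ∣ 3 * g + 3) : x = 3 := by
  have hy : y ∣ 3 * g + 3 := (Dvd.intro_left x rfl).trans hdvd
  interval_cases x
  · simp at hdvd
  · have h6 : y ∣ 6 := (Nat.dvd_add_right hy).mp ⟨3, by omega⟩
    have := Nat.le_of_dvd (by norm_num) h6
    omega
  · have h3 : y ∣ 3 := (Nat.dvd_add_right hy).mp ⟨3, by omega⟩
    have := Nat.le_of_dvd (by norm_num) h3
    omega
  · rfl

lemma eq_three_and_succ_of_add_eq_of_mul_dvd (hg : 4 ≤ g) (hsum : x + y = g + 4)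
    (hdvd : x * y ∣ 3 * g + 3) : x = 3 ∧ y = g + 1 ∨ x = g + 1 ∧ y = 3 := by
  have hle : x * y ≤ 3 * g + 3 := Nat.le_of_dvd (by omega) hdvd
  -- `(x - 3)(y - 3) = xy - (3g + 3)`
  have key : ((x : ℤ) - 3) * ((y : ℤ) - 3) ≤ 0 := by
    have : (x : ℤ) * y ≤ 3 * g + 3 := by exact_mod_cast hle
    have : (x : ℤ) + y = g + 4 := by exact_mod_cast hsum
    nlinarith
  have hsmall : x ≤ 3 ∨ y ≤ 3 := by
    by_contra! h
    nlinarith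
  rcases hsmall with hx | hy
  · have := eq_three_of_le_three hg hx hsum hdvd
    omega
  · have := eq_three_of_le_three (y := x) hg hy (by omega) (by rwa [mul_comm])
    omega

lemma eq_one_and_self_of_add_eq_of_mul_dvd (hmod : g % 3 = 2) (hsum : x + y = g + 1)
    (hdvd : x * y ∣ 3 * g) : x = 1 ∧ y = g ∨ x = g ∧ y = 1 := by
  have h3 : Nat.Coprime 3 (x * y) := by
    rw [Nat.Prime.coprime_iff_not_dvd Nat.prime_three, Nat.Prime.dvd_mul Nat.prime_three]
    intro hxy
    have h9 : 3 * 3 ∣ 3 * g := (Nat.mul_dvd_mul (by omega) (by omega)).trans hdvd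
    omega
  have hle : x * y ≤ g := Nat.le_of_dvd (by omega) (h3.symm.dvd_of_dvd_mul_left hdvd)
  have key : ((x : ℤ) - 1) * ((y : ℤ) - 1) ≤ 0 := by
    have : (x : ℤ) * y ≤ g := by exact_mod_cast hle
    have : (x : ℤ) + y = g + 1 := by exact_mod_cast hsum
    nlinarith
  obtain ⟨hx0, hy0⟩ : x ≠ 0 ∧ y ≠ 0 :=
    Nat.mul_ne_zero_iff.mp (ne_zero_of_dvd_ne_zero (by omega) hdvd)
  have hsmall : x ≤ 1 ∨ y ≤ 1 := by
    by_contra! h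
    nlinarith
  omega
end

section
variable {g m : ℕ}

lemma eq_or_eq_succ_of_gcd_add_gcd_succ_three_mul_add_three (hg : 4 ≤ g) (hm0 : 0 < m)
    (hm : 2 * m ≤ 3 * g) (h : Nat.gcd m (3 * g + 3) + Nat.gcd (m + 1) (3 * g + 3) = g + 4) :
    m = g ∧ 3 ∣ g ∨ m = g + 1 ∧ 3 ∣ g + 2 := by
  rcases eq_three_and_succ_of_add_eq_of_mul_dvd hg h (Nat.gcd_mul_gcd_succ_dvd m _)
    with ⟨h1, h2⟩ | ⟨h1, h2⟩
  · have h3 : 3 ∣ m := h1 ▸ Nat.gcd_dvd_left _ _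
    have : m + 1 = g + 1 :=
      Nat.eq_of_dvd_of_lt_two_mul (by omega) (h2 ▸ Nat.gcd_dvd_left _ _) (by omega)
    exact .inl ⟨by omega, by omega⟩
  · have h3 : 3 ∣ m + 1 := h2 ▸ Nat.gcd_dvd_left _ _
    have : m = g + 1 :=
      Nat.eq_of_dvd_of_lt_two_mul (by omega) (h1 ▸ Nat.gcd_dvd_left _ _) (by omega)
    exact .inr ⟨this, by omega⟩

lemma succ_eq_of_gcd_add_gcd_succ_three_mul (hmod : g % 3 = 2) (hm0 : 0 < m)
    (hm : 2 * m + 3 ≤ 3 * g) (h : Nat.gcd m (3 * g) + Nat.gcd (m + 1) (3 * g) = g + 1) :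
    m + 1 = g := by
  rcases eq_one_and_self_of_add_eq_of_mul_dvd hmod h (Nat.gcd_mul_gcd_succ_dvd m _)
    with ⟨-, h2⟩ | ⟨h1, h2⟩
  · exact Nat.eq_of_dvd_of_lt_two_mul (by omega) (h2 ▸ Nat.gcd_dvd_left _ _) (by omega)
  · have : m = g :=
      Nat.eq_of_dvd_of_lt_two_mul (by omega) (h1 ▸ Nat.gcd_dvd_left _ _) (by omega)
    have : 3 ∣ Nat.gcd (m + 1) (3 * g) := Nat.dvd_gcd (by omega) (dvd_mul_right 3 g)
    omega
end

/-- Uniqueness, for `g ≥ 4`, of the elementary tête-à-tête graph `E_{n,a}` of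
genus `g` realizing the maximal order `n`. -/
theorem elementary_tat_maximal_order_unique
    (g n a : ℕ) (hg : 4 ≤ g) (ha : Odd a) (h3 : 3 ≤ a) (h2 : a ≤ n - 2)
    (hgen : n + 1 = 2 * g +
      (Nat.gcd ((a + 1) / 2 - 1) n + Nat.gcd ((a + 1) / 2) n)) :
    (g % 3 = 0 → n = 3 * g + 3 → a = 2 * g + 1) ∧
    (g % 3 = 1 → n = 3 * g + 3 → a = 2 * g + 3) ∧
    (g % 3 = 2 → n = 3 * g → a = 2 * g - 1) := by
  obtain ⟨m, rfl⟩ := ha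
  rw [show (2 * m + 1 + 1) / 2 = m + 1 by omega, Nat.add_sub_cancel] at hgen
  refine ⟨fun hmod hn => ?_, fun hmod hn => ?_, fun hmod hn => ?_⟩ <;> subst hn
  · rcases eq_or_eq_succ_of_gcd_add_gcd_succ_three_mul_add_three (m := m) hg
      (by omega) (by omega) (by omega) with ⟨rfl, -⟩ | ⟨-, h⟩ <;> omega
  · rcases eq_or_eq_succ_of_gcd_add_gcd_succ_three_mul_add_three (m := m) hg
      (by omega) (by omega) (by omega) with ⟨-, h⟩ | ⟨rfl, -⟩ <;> omega
  · have := succ_eq_of_gcd_add_gcd_succ_three_mul (m := m) hmod (by omega) (by omega) (by omega)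
    omega
end

section
/- Let n and k be natural numbers with 2 ≤ k and 2k + 1 ≤ n. Then 3·(gcd(k−1, n) + gcd(k, n)) ≤ n + 9. -/
/-! The two gcds are coprime divisors of `n`, each at most `k < n / 2`, so each is at most `n / 3`
and their product divides `n`. If one of them is at most `2` the first fact suffices; otherwise
`(d - 3) (e - 3) ≥ 0` gives `3 (d + e) ≤ d e + 9 ≤ n + 9`. -/

namespace Nat

theorem three_mul_le_of_dvd_of_two_mul_lt_s6 {a n : ℕ} (h : a ∣ n) (h2 : 2 * a < n) : 3 * a ≤ n := by
  obtain ⟨m, rfl⟩ := h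
  rcases Nat.lt_or_ge m 3 with hm | hm
  · interval_cases m <;> omega
  · exact Nat.mul_comm 3 a ▸ Nat.mul_le_mul_left a hm

theorem three_mul_add_le_of_coprime_of_dvd {d e n : ℕ} (hde : d.Coprime e) (hd : d ∣ n)
    (he : e ∣ n) (hd2 : 2 * d < n) (he2 : 2 * e < n) : 3 * (d + e) ≤ n + 9 := by
  have h3d := three_mul_le_of_dvd_of_two_mul_lt_s6 hd hd2
  have h3e := three_mul_le_of_dvd_of_two_mul_lt_s6 he he2
  by_cases hsmall : d ≤ 2 ∨ e ≤ 2
  · omega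
  have hprod : d * e ≤ n := Nat.le_of_dvd (by omega) (hde.mul_dvd_of_dvd_of_dvd hd he)
  nlinarith [Nat.mul_le_mul (show 3 ≤ d by omega) (show 3 ≤ e by omega)]

theorem coprime_gcd_sub_one_gcd {k : ℕ} (hk : 0 < k) (n : ℕ) :
    (gcd (k - 1) n).Coprime (gcd k n) :=
  ((coprime_self_sub_left hk).mpr (coprime_one_left k)).coprime_dvd_left (gcd_dvd_left _ _)
    |>.coprime_dvd_right (gcd_dvd_left _ _)

end Nat

/-- The main estimate: for `2 ≤ k` and `2k + 1 ≤ n`,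
`3 * (gcd(k-1, n) + gcd(k, n)) ≤ n + 9`. -/
theorem three_mul_gcd_add_gcd_le (n k : ℕ) (hk : 2 ≤ k) (hn : 2 * k + 1 ≤ n) :
    3 * (Nat.gcd (k - 1) n + Nat.gcd k n) ≤ n + 9 := by
  have hd : Nat.gcd (k - 1) n ≤ k - 1 := Nat.gcd_le_left n (by omega)
  have he : Nat.gcd k n ≤ k := Nat.gcd_le_left n (by omega)
  exact Nat.three_mul_add_le_of_coprime_of_dvd (Nat.coprime_gcd_sub_one_gcd (by omega) n)
    (Nat.gcd_dvd_right _ _) (Nat.gcd_dvd_right _ _) (by omega) (by omega)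
end

section
/- Let n ≥ 1 and let σ be a map from ZMod (2n) to itself satisfying σ ∘ σ = id and σ(x + 2) = σ(x) + 2 for all x, and suppose that the image of σ(0) under the natural ring homomorphism ZMod (2n) → ZMod 2 equals 1 (i.e., σ(0) is odd). Set a = σ(0). Then for every x ∈ ZMod (2n): if x maps to 0 in ZMod 2 then σ(x) = x + a, and if x maps to 1 in ZMod 2 then σ(x) = x − a. -/
/-!
Commuting with `x ↦ x + 2` forces `σ (2k) = 2k + σ 0` on every even point. An odd point `x` is
then the image of the even point `x - σ 0`, and `σ` being an involution gives `σ x = x - σ 0`.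
-/

theorem apply_add_zsmul_of_apply_add {G : Type*} [AddGroup G] {σ : G → G} {c : G}
    (hσ : ∀ x, σ (x + c) = σ x + c) (x : G) (k : ℤ) : σ (x + k • c) = σ x + k • c := by
  induction k using Int.induction_on with
  | zero => simp
  | succ k ih => rw [add_one_zsmul, ← add_assoc, hσ, ih, add_assoc]
  | pred k ih =>
    have hσ' : ∀ y, σ (y - c) = σ y - c := fun y => by rw [eq_sub_iff_add_eq, ← hσ, sub_add_cancel]
    rw [sub_one_zsmul, ← sub_eq_add_neg, ← add_sub_assoc, hσ', ih, add_sub_assoc]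

theorem ZMod.exists_eq_mul_intCast_of_castHom_eq_zero {m d : ℕ} (hd : d ∣ m) {x : ZMod m}
    (hx : ZMod.castHom hd (ZMod d) x = 0) : ∃ k : ℤ, x = d * k := by
  obtain ⟨a, rfl⟩ := ZMod.intCast_surjective x
  rw [map_intCast, ZMod.intCast_zmod_eq_zero_iff_dvd] at hx
  obtain ⟨k, rfl⟩ := hx
  exact ⟨k, by push_cast; rfl⟩

theorem ZMod.apply_eq_add_apply_zero_of_castHom_two_eq_zero {m : ℕ} (hm : 2 ∣ m)
    {σ : ZMod m → ZMod m} (hrot : ∀ x, σ (x + 2) = σ x + 2) {x : ZMod m}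
    (hx : ZMod.castHom hm (ZMod 2) x = 0) : σ x = x + σ 0 := by
  obtain ⟨k, rfl⟩ := ZMod.exists_eq_mul_intCast_of_castHom_eq_zero hm hx
  have h := apply_add_zsmul_of_apply_add hrot 0 k
  rw [zero_add, zsmul_eq_mul] at h
  push_cast at h ⊢
  rw [mul_comm, h, add_comm]

theorem chord_diagram_rotation_two_classification_general
    (n : ℕ) (σ : ZMod (2 * n) → ZMod (2 * n))
    (hinv : ∀ x, σ (σ x) = x)
    (hrot : ∀ x, σ (x + 2) = σ x + 2)
    (hodd : ZMod.castHom (dvd_mul_right 2 n) (ZMod 2) (σ 0) = 1) :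
    ∀ x : ZMod (2 * n),
      (ZMod.castHom (dvd_mul_right 2 n) (ZMod 2) x = 0 → σ x = x + σ 0) ∧
      (ZMod.castHom (dvd_mul_right 2 n) (ZMod 2) x = 1 → σ x = x - σ 0) := by
  intro x
  refine ⟨ZMod.apply_eq_add_apply_zero_of_castHom_two_eq_zero _ hrot, fun hx => ?_⟩
  have hpre : σ (x - σ 0) = x := by
    rw [ZMod.apply_eq_add_apply_zero_of_castHom_two_eq_zero _ hrot
      (by rw [map_sub, hx, hodd, sub_self]), sub_add_cancel]
  simpa only [hpre] using hinv (x - σ 0)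

/-- Classification of elementary tête-à-tête chord diagrams with walk
length 2: if `σ` is an involution of `ZMod (2n)` commuting with rotation by
two steps and `a = σ 0` is odd, then `σ x = x + a` for even `x` and
`σ x = x - a` for odd `x`. -/
theorem chord_diagram_rotation_two_classification
    (n : ℕ) (hn : 1 ≤ n) (σ : ZMod (2 * n) → ZMod (2 * n))
    (hinv : ∀ x, σ (σ x) = x)
    (hrot : ∀ x, σ (x + 2) = σ x + 2)
    (hodd : ZMod.castHom (dvd_mul_right 2 n) (ZMod 2) (σ 0) = 1) :
    ∀ x : ZMod (2 * n),
      (ZMod.castHom (dvd_mul_right 2 n) (ZMod 2) x = 0 → σ x = x + σ 0) ∧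
      (ZMod.castHom (dvd_mul_right 2 n) (ZMod 2) x = 1 → σ x = x - σ 0) :=
  chord_diagram_rotation_two_classification_general n σ hinv hrot hodd
end

section
/- There do not exist a matrix A in SL(2, ℤ) and an integer k ≥ 2 such that A^k equals the matrix [[1, 1], [0, 1]]. In other words, the matrix [[1, 1], [0, 1]] has no roots in SL(2, ℤ). -/
/-!
A root `M` of `T = !![1, 1; 0, 1]` commutes with `T`, which forces `M = !![a, b; 0, a]`.
The powers of such a matrix are `!![a ^ n, n * a ^ (n - 1) * b; 0, a ^ n]`, so `M ^ n = T` makes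
`n` divide the upper right entry `1` of `T`, whence `n ≤ 1`.
-/

namespace Matrix

theorem eq_of_commute_unipotent {R : Type*} [Ring R] {M : Matrix (Fin 2) (Fin 2) R}
    (h : Commute M !![1, 1; 0, 1]) : M = !![M 0 0, M 0 1; 0, M 0 0] := by
  have entry (i j : Fin 2) := congrFun (congrFun h.eq i) j
  have h10 : M 1 0 = 0 := by simpa [mul_apply, Fin.sum_univ_two] using entry 0 0
  have h11 : M 1 1 = M 0 0 := by
    simpa [mul_apply, Fin.sum_univ_two, h10, add_comm (M 0 1)] using (entry 0 1).symm
  conv_lhs => rw [eta_fin_two M, h10, h11]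

theorem pow_upper_scalar {R : Type*} [CommRing R] (a b : R) (n : ℕ) :
    !![a, b; 0, a] ^ n = !![a ^ n, n * a ^ (n - 1) * b; 0, a ^ n] := by
  induction n with
  | zero => simp [one_fin_two]
  | succ n ih =>
    rw [pow_succ, ih, mul_fin_two]
    congr 1
    simp only [mul_zero, zero_mul, add_zero, zero_add, ← pow_succ]
    rcases n with _ | n
    · simp
    · simp only [Nat.add_sub_cancel, pow_succ]
      push_cast
      ring_nf

theorem le_one_of_pow_eq_unipotent {M : Matrix (Fin 2) (Fin 2) ℤ} {n : ℕ}
    (h : M ^ n = !![1, 1; 0, 1]) : n ≤ 1 := by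
  have hM := eq_of_commute_unipotent (h ▸ Commute.self_pow M n)
  rw [hM, pow_upper_scalar] at h
  have h01 : (n : ℤ) * (M 0 0 ^ (n - 1) * M 0 1) = 1 := by
    simpa [mul_assoc] using congrFun (congrFun h 0) 1
  exact_mod_cast Int.le_of_dvd one_pos (Dvd.intro _ h01)

end Matrix

/-- The matrix `[[1, 1], [0, 1]]` has no roots in `SL(2, ℤ)`: Dehn twists on
the torus have no roots. -/
theorem dehn_twist_matrix_has_no_roots :
    ¬ ∃ (A : Matrix.SpecialLinearGroup (Fin 2) ℤ) (k : ℤ), 2 ≤ k ∧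
      A ^ k = (⟨!![1, 1; 0, 1], by simp [Matrix.det_fin_two_of]⟩ :
        Matrix.SpecialLinearGroup (Fin 2) ℤ) := by
  rintro ⟨A, k, hk, hA⟩
  lift k to ℕ using by omega
  rw [zpow_natCast] at hA
  have := Matrix.le_one_of_pow_eq_unipotent (congrArg Subtype.val hA)
  omega
end
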